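/- Let φ(ȳ) be a property of runs parameterized by global variables ȳ, and let Γ' be the system obtained from Γ by adding ȳ as artifact variables that are propagated (unchanged) by every service. Then every run of Γ' projects to a run of Γ with a fixed valuation of ȳ, and conversely every run of Γ paired with any fixed valuation ν of ȳ lifts to a run of Γ'. Consequently Γ satisfies ∀ȳ φ(ȳ) iff Γ' satisfies φ. -/

import Mathlib

/-- A run of the system `Γ` with initial condition `Init` and service transitions `T`. -/
def IsRun {V T : Type*} (Init : V → Prop) (Tr : T → V → V → Prop) (ρ : ℕ → V) : Prop :=
  Init (ρ 0) ∧ ∀ i : ℕ, ∃ σ : T, Tr σ (ρ i) (ρ (i + 1))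

/-- A run of the extended system `Γ'` where the global variables (second component) are
propagated unchanged by every service. -/
def IsRunExt {V W T : Type*} (Init : V → Prop) (Tr : T → V → V → Prop)
    (ρ' : ℕ → V × W) : Prop :=
  Init (ρ' 0).1 ∧ ∀ i : ℕ, ∃ σ : T, Tr σ (ρ' i).1 (ρ' (i + 1)).1 ∧ (ρ' (i + 1)).2 = (ρ' i).2

section Runs

variable {V W T : Type*} {Init : V → Prop} {Tr : T → V → V → Prop}

theorem IsRunExt.snd_eq_snd_zero {ρ' : ℕ → V × W} (h : IsRunExt Init Tr ρ') (i : ℕ) :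
    (ρ' i).2 = (ρ' 0).2 := by
  induction i with
  | zero => rfl
  | succ n ih =>
    obtain ⟨_, _, hstep⟩ := h.2 n
    rw [hstep, ih]

theorem IsRunExt.isRun_fst {ρ' : ℕ → V × W} (h : IsRunExt Init Tr ρ') :
    IsRun Init Tr fun i => (ρ' i).1 :=
  ⟨h.1, fun i => (h.2 i).imp fun _ hσ => hσ.1⟩

theorem IsRun.isRunExt_const {ρ : ℕ → V} (h : IsRun Init Tr ρ) (w : W) :
    IsRunExt Init Tr fun i => (ρ i, w) :=
  ⟨h.1, fun i => (h.2 i).imp fun _ hσ => ⟨hσ, rfl⟩⟩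

end Runs

/-- Runs of the extended system are exactly runs of `Γ` paired with a constant valuation
of the global variables; consequently `Γ ⊨ ∀ȳ φ(ȳ)` iff `Γ' ⊨ φ`. -/
theorem extended_system_runs_and_satisfaction
    {V W T : Type*} (Init : V → Prop) (Tr : T → V → V → Prop)
    (φ : (ℕ → V) → W → Prop) :
    (∀ ρ' : ℕ → V × W, IsRunExt Init Tr ρ' →
        (∀ i : ℕ, (ρ' i).2 = (ρ' 0).2) ∧ IsRun Init Tr fun i => (ρ' i).1) ∧
      (∀ (ρ : ℕ → V) (w : W), IsRun Init Tr ρ → IsRunExt Init Tr fun i => (ρ i, w)) ∧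
      ((∀ ρ : ℕ → V, IsRun Init Tr ρ → ∀ w : W, φ ρ w) ↔
        ∀ ρ' : ℕ → V × W, IsRunExt Init Tr ρ' → φ (fun i => (ρ' i).1) (ρ' 0).2) :=
  ⟨fun _ h => ⟨h.snd_eq_snd_zero, h.isRun_fst⟩,
    fun _ w h => h.isRunExt_const w,
    ⟨fun H _ h => H _ h.isRun_fst _, fun H _ h w => H _ (h.isRunExt_const w)⟩⟩
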